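/- arXiv:2108.10658 — 6 statements merged into one kernel-verified Lean document; each statement's English description precedes it below -/
import Mathlib

section
/- For each natural number n and each θ ∈ (0, π/2), there exists a unique real number r in the open interval (nπ, (n+1)π) such that r·cot(r) = −cot(θ). -/
/-!
Since `(r cot r)' = (sin r cos r - r) / sin² r` and `sin 2r < 2r` for `r > 0`, the map
`r ↦ r cot r` is strictly decreasing on each interval `(nπ, (n+1)π)`. It vanishes at the
midpoint `nπ + π/2` and tends to `-∞` at the right endpoint, so by the intermediate value
theorem it takes the negative value `-cot θ` exactly once there.
-/

open Real Set Filter Topology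

lemma existsUnique_eq_of_strictAntiOn_of_tendsto_atBot
    {α δ : Type*} [ConditionallyCompleteLinearOrder α] [TopologicalSpace α] [OrderTopology α]
    [DenselyOrdered α] [LinearOrder δ] [TopologicalSpace δ] [OrderClosedTopology δ] [NoMinOrder δ]
    {f : α → δ} {a b m : α} {t : δ} (hm : m ∈ Ioo a b) (hf : ContinuousOn f (Ioo a b))
    (hf' : StrictAntiOn f (Ioo a b)) (hlim : Tendsto f (𝓝[<] b) atBot) (ht : t ≤ f m) :
    ∃! x, x ∈ Ioo a b ∧ f x = t := by
  have : (𝓝[<] b).NeBot := nhdsLT_neBot_of_exists_lt ⟨m, hm.2⟩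
  obtain ⟨c, hfc, hc⟩ :=
    ((hlim.eventually (eventually_lt_atBot t)).and (Ioo_mem_nhdsLT hm.2)).exists
  have hsub : Icc m c ⊆ Ioo a b := Icc_subset_Ioo hm.1 hc.2
  obtain ⟨x, hx, hfx⟩ := intermediate_value_Icc' hc.1.le (hf.mono hsub) ⟨hfc.le, ht⟩
  exact ⟨x, ⟨hsub hx, hfx⟩, fun y ⟨hy, hfy⟩ => hf'.injOn hy (hsub hx) (hfy.trans hfx.symm)⟩

namespace Real

lemma cos_mul_sin_lt_self {r : ℝ} (hr : 0 < r) : cos r * sin r < r := by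
  have := sin_lt (mul_pos two_pos hr)
  rw [sin_two_mul] at this
  linarith

lemma sin_ne_zero_of_mem_Ioo_nat_mul_pi {n : ℕ} {r : ℝ} (hr : r ∈ Ioo (n * π) ((n + 1) * π)) :
    sin r ≠ 0 := by
  have hs : r - n * π ∈ Ioo 0 π := ⟨by linarith [hr.1], by linarith [hr.2]⟩
  rw [← sub_add_cancel r (n * π), sin_add_nat_mul_pi]
  exact mul_ne_zero (pow_ne_zero _ (by norm_num)) (sin_pos_of_mem_Ioo hs).ne'

lemma hasDerivAt_mul_cos_div_sin {r : ℝ} (hr : sin r ≠ 0) :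
    HasDerivAt (fun x => x * (cos x / sin x)) ((cos r * sin r - r) / sin r ^ 2) r := by
  refine ((hasDerivAt_id' r).mul ((hasDerivAt_cos r).div (hasDerivAt_sin r) hr)).congr_deriv ?_
  rw [Pi.div_apply]
  field_simp
  linear_combination -r * sin_sq_add_cos_sq r

lemma continuousOn_mul_cos_div_sin (n : ℕ) :
    ContinuousOn (fun r => r * (cos r / sin r)) (Ioo (n * π) ((n + 1) * π)) := fun _ hr =>
  (hasDerivAt_mul_cos_div_sin (sin_ne_zero_of_mem_Ioo_nat_mul_pi hr)).continuousAt.continuousWithinAt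

lemma strictAntiOn_mul_cos_div_sin (n : ℕ) :
    StrictAntiOn (fun r => r * (cos r / sin r)) (Ioo (n * π) ((n + 1) * π)) := by
  refine strictAntiOn_of_deriv_neg (convex_Ioo _ _) (continuousOn_mul_cos_div_sin n) fun r hr => ?_
  rw [interior_Ioo] at hr
  have hsin := sin_ne_zero_of_mem_Ioo_nat_mul_pi hr
  have hr0 : 0 < r := lt_of_le_of_lt (by positivity) hr.1
  rw [(hasDerivAt_mul_cos_div_sin hsin).deriv]
  exact div_neg_of_neg_of_pos (sub_neg.2 (cos_mul_sin_lt_self hr0)) (by positivity)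

lemma tendsto_cos_div_sin_nhdsLT_zero : Tendsto (fun x => cos x / sin x) (𝓝[<] 0) atBot := by
  have hcos : Tendsto cos (𝓝[<] 0) (𝓝 1) := by
    simpa using continuous_cos.tendsto 0 |>.mono_left nhdsWithin_le_nhds
  have hsin : Tendsto sin (𝓝[<] 0) (𝓝[<] 0) := by
    refine tendsto_nhdsWithin_of_tendsto_nhds_of_eventually_within _ ?_ ?_
    · simpa using continuous_sin.tendsto 0 |>.mono_left nhdsWithin_le_nhds
    · filter_upwards [Ioo_mem_nhdsLT (neg_lt_zero.2 pi_pos)] with x hx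
      exact sin_neg_of_neg_of_neg_pi_lt hx.2 hx.1
  simpa only [div_eq_mul_inv, Function.comp_def] using
    hcos.pos_mul_atBot one_pos (tendsto_inv_nhdsLT_zero.comp hsin)

lemma tendsto_cos_div_sin_nhdsLT_int_mul_pi (k : ℤ) :
    Tendsto (fun x => cos x / sin x) (𝓝[<] (k * π)) atBot := by
  have hshift : Tendsto (fun x => x - k * π) (𝓝[<] (k * π)) (𝓝[<] 0) := by
    refine tendsto_nhdsWithin_of_tendsto_nhds_of_eventually_within _ ?_ ?_
    · simpa using (continuous_sub_right (k * π)).tendsto (k * π) |>.mono_left nhdsWithin_le_nhds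
    · filter_upwards [self_mem_nhdsWithin] with x (hx : x < k * π) using sub_neg.2 hx
  have hper : ∀ x, cos (x - k * π) / sin (x - k * π) = cos x / sin x := fun x =>
    (cos_antiperiodic.div sin_antiperiodic).sub_int_mul_eq k
  simpa only [Function.comp_def, hper] using tendsto_cos_div_sin_nhdsLT_zero.comp hshift

lemma tendsto_mul_cos_div_sin_nhdsLT_succ_mul_pi (n : ℕ) :
    Tendsto (fun r => r * (cos r / sin r)) (𝓝[<] ((n + 1) * π)) atBot := by
  have hcot := tendsto_cos_div_sin_nhdsLT_int_mul_pi (n + 1)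
  push_cast at hcot
  exact (tendsto_id.mono_left nhdsWithin_le_nhds).pos_mul_atBot (by positivity) hcot

end Real

theorem unique_root_r_cot_eq_neg_cot
    (n : ℕ) (θ : ℝ) (hθ : θ ∈ Ioo 0 (π / 2)) :
    ∃! r : ℝ, r ∈ Ioo (n * π) ((n + 1) * π) ∧
      r * (Real.cos r / Real.sin r) = -(Real.cos θ / Real.sin θ) := by
  have hπ := pi_pos
  have hcot : 0 < cos θ / sin θ :=
    div_pos (cos_pos_of_mem_Ioo ⟨by linarith [hθ.1], hθ.2⟩)
      (sin_pos_of_pos_of_lt_pi hθ.1 (by linarith [hθ.2]))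
  have hmid : cos (n * π + π / 2) = 0 := by
    rw [add_comm, cos_add_nat_mul_pi, cos_pi_div_two, mul_zero]
  refine existsUnique_eq_of_strictAntiOn_of_tendsto_atBot
    (m := n * π + π / 2) ⟨by linarith, by linarith⟩ (continuousOn_mul_cos_div_sin n)
    (strictAntiOn_mul_cos_div_sin n) (tendsto_mul_cos_div_sin_nhdsLT_succ_mul_pi n) ?_
  simp only [hmid, zero_div, mul_zero]
  linarith
end

section
/- Let N ≥ 1, 0 < h_m < h_M, c ∈ ℝ, and A ∈ ℝ^{N×N} be a Hurwitz matrix with simple eigenvalues μ_1, …, μ_N satisfying Re μ_n < −3|c| for all n. Then there exist σ, C₀, C₁ > 0 such that for every continuous initial condition x₀ : [−h_M, 0] → ℝ^N, every continuous delay h : [0,∞) → [h_m, h_M], and every continuous forcing q : [0,∞) → ℝ^N, the solution x of ẋ(t) = A x(t) + c(x(t−h(t)) − x(t)) + q(t), x|_{[−h_M,0]} = x₀, satisfies ‖x(t)‖ ≤ C₀ e^{−σ t} sup_{τ∈[−h_M,0]} ‖x₀(τ)‖ + C₁ sup_{τ∈[0,t]} e^{−σ(t−τ)} ‖q(τ)‖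 for all t ≥ 0. -/
/-!
Diagonalise `A` over `ℂ` by its left eigenvectors: in the coordinates `y = W x` the delay system
decouples into scalar equations `y' = (μₖ - c) y + c y(t - h(t)) + rₖ`, whose instantaneous part is
dissipative at rate `α > |c|`. For such a scalar equation, variation of constants bounds the
weighted quantity `e^{σ s} |y(s)|` by its own maximum over `[-h_M, T]` times
`|c| e^{σ h_M} / (α - σ) < 1`, plus the data; solving this Halanay-type inequality for the maximum
gives the decay estimate, which transfers back to `x` through `W⁻¹`.
-/

open Real Set Polynomial Filter Topology Matrix
open scoped Matrix.Norms.Operator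

theorem integral_exp_neg_mul_sub {β : ℝ} (hβ : β ≠ 0) (τ : ℝ) :
    ∫ s in (0 : ℝ)..τ, exp (-β * (τ - s)) = (1 - exp (-β * τ)) / β := by
  have hF : ∀ s ∈ uIcc 0 τ,
      HasDerivAt (fun s => exp (-β * (τ - s)) / β) (exp (-β * (τ - s))) s := fun s _ => by
    refine ((((hasDerivAt_id' s).const_sub τ).const_mul (-β)).exp.div_const β).congr_deriv ?_
    field_simp
  rw [intervalIntegral.integral_eq_sub_of_hasDerivAt hF
    (by apply Continuous.intervalIntegrable; fun_prop)]
  simp [sub_div]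

theorem norm_smul_delay_add_le {E : Type*} [NormedAddCommGroup E] [NormedSpace ℂ E] {κ : ℂ}
    {σ h_M T U R s d : ℝ} {y : ℝ → E} {w : E} (hσ : 0 ≤ σ) (hs : s ∈ Icc 0 T)
    (hd : d ∈ Icc 0 h_M) (hU : ∀ s ∈ Icc (-h_M) T, exp (σ * s) * ‖y s‖ ≤ U)
    (hw : exp (-σ * (T - s)) * ‖w‖ ≤ R) :
    ‖κ • y (s - d) + w‖ ≤ (‖κ‖ * exp (σ * h_M) * U + exp (σ * T) * R) * exp (-σ * s) := by
  obtain ⟨hd0, hdM⟩ := hd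
  have hdelayed : ‖y (s - d)‖ ≤ exp (σ * h_M) * exp (-σ * s) * U :=
    calc ‖y (s - d)‖ = exp (-(σ * (s - d))) * (exp (σ * (s - d)) * ‖y (s - d)‖) := by
          rw [← mul_assoc, ← exp_add, neg_add_cancel, exp_zero, one_mul]
      _ ≤ exp (-(σ * (s - d))) * U := by
          gcongr
          exact hU _ ⟨by linarith [hs.1], by linarith [hs.2]⟩
      _ ≤ exp (σ * h_M) * exp (-σ * s) * U := by
          have hU0 : 0 ≤ U := (by positivity : 0 ≤ exp (σ * s) * ‖y s‖).trans
            (hU s ⟨by linarith [hs.1], hs.2⟩)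
          rw [← exp_add]
          gcongr
          nlinarith
  have hw' : ‖w‖ ≤ exp (σ * T) * exp (-σ * s) * R :=
    calc ‖w‖ = exp (σ * (T - s)) * (exp (-σ * (T - s)) * ‖w‖) := by
          rw [← mul_assoc, ← exp_add]; ring_nf; simp
      _ ≤ exp (σ * (T - s)) * R := by gcongr
      _ = exp (σ * T) * exp (-σ * s) * R := by rw [← exp_add]; ring_nf
  calc _ ≤ ‖κ‖ * ‖y (s - d)‖ + ‖w‖ := (norm_add_le _ _).trans_eq (by rw [norm_smul])
    _ ≤ ‖κ‖ * (exp (σ * h_M) * exp (-σ * s) * U) + exp (σ * T) * exp (-σ * s) * R := by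
        gcongr
    _ = (‖κ‖ * exp (σ * h_M) * U + exp (σ * T) * R) * exp (-σ * s) := by ring

section ScalarEquations

variable {E : Type*} [NormedAddCommGroup E] [NormedSpace ℂ E] [CompleteSpace E]

theorem eq_exp_smul_add_integral_of_hasDerivAt {ν : ℂ} {y g : ℝ → E} {τ : ℝ} (hτ : 0 ≤ τ)
    (hg : ContinuousOn g (Icc 0 τ)) (hy : ∀ s ∈ Icc 0 τ, HasDerivAt y (ν • y s + g s) s) :
    y τ = Complex.exp (ν * τ) • y 0 + ∫ s in (0 : ℝ)..τ, Complex.exp (ν * (τ - s)) • g s := by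
  have hderiv : ∀ s ∈ uIcc 0 τ, HasDerivAt (fun s : ℝ => Complex.exp (-(ν * s)) • y s)
      (Complex.exp (-(ν * s)) • g s) s := fun s hs => by
    rw [uIcc_of_le hτ] at hs
    have hexp : HasDerivAt (fun s : ℝ => Complex.exp (-(ν * s)))
        (-ν * Complex.exp (-(ν * s))) s := by
      simpa [mul_comm] using (((hasDerivAt_id s).ofReal_comp.const_mul ν).neg).cexp
    refine (hexp.fun_smul (hy s hs)).congr_deriv ?_
    module
  have hint : IntervalIntegrable (fun s : ℝ => Complex.exp (-(ν * s)) • g s)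
      MeasureTheory.volume 0 τ := by
    apply ContinuousOn.intervalIntegrable
    rw [uIcc_of_le hτ]
    exact (Continuous.continuousOn (by fun_prop)).smul hg
  have hsplit : ∀ s : ℝ, Complex.exp (ν * (τ - s)) • g s
      = Complex.exp (ν * τ) • Complex.exp (-(ν * s)) • g s := fun s => by
    rw [smul_smul, ← Complex.exp_add]; ring_nf
  simp_rw [hsplit, intervalIntegral.integral_smul,
    intervalIntegral.integral_eq_sub_of_hasDerivAt hderiv hint, smul_sub, smul_smul,
    ← Complex.exp_add]
  simp

theorem norm_le_of_hasDerivAt_of_re_le {ν : ℂ} {α σ K τ : ℝ} {y g : ℝ → E} (hν : ν.re ≤ -α)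
    (hσα : σ < α) (hτ : 0 ≤ τ) (hg : ContinuousOn g (Icc 0 τ))
    (hy : ∀ s ∈ Icc 0 τ, HasDerivAt y (ν • y s + g s) s)
    (hgK : ∀ s ∈ Icc 0 τ, ‖g s‖ ≤ K * exp (-σ * s)) :
    ‖y τ‖ ≤ exp (-α * τ) * ‖y 0‖ + K * exp (-σ * τ) / (α - σ) := by
  have hK : 0 ≤ K := by simpa using (norm_nonneg _).trans (hgK 0 ⟨le_rfl, hτ⟩)
  have hβ : 0 < α - σ := sub_pos.mpr hσα
  have hnorm_exp : ∀ s ≤ τ, ‖Complex.exp (ν * (τ - s))‖ ≤ exp (-α * (τ - s)) := fun s hs => by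
    rw [Complex.norm_exp, ← Complex.ofReal_sub, Complex.re_mul_ofReal]
    exact exp_le_exp.mpr (mul_le_mul_of_nonneg_right hν (sub_nonneg.mpr hs))
  have hintegrand : ∀ s ∈ Icc 0 τ, ‖Complex.exp (ν * (τ - s)) • g s‖
      ≤ K * exp (-σ * τ) * exp (-(α - σ) * (τ - s)) := fun s hs => by
    rw [norm_smul]
    calc _ ≤ exp (-α * (τ - s)) * (K * exp (-σ * s)) :=
          mul_le_mul (hnorm_exp s hs.2) (hgK s hs) (norm_nonneg _) (exp_pos _).le
      _ = K * exp (-σ * τ) * exp (-(α - σ) * (τ - s)) := by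
          rw [mul_left_comm, mul_assoc, ← exp_add, ← exp_add]; ring_nf
  have hintegral : ‖∫ s in (0 : ℝ)..τ, Complex.exp (ν * (τ - s)) • g s‖
      ≤ K * exp (-σ * τ) / (α - σ) := by
    refine (intervalIntegral.norm_integral_le_of_norm_le hτ
      (Eventually.of_forall fun s hs => hintegrand s (Ioc_subset_Icc_self hs))
      (by apply Continuous.intervalIntegrable; fun_prop)).trans ?_
    rw [intervalIntegral.integral_const_mul, integral_exp_neg_mul_sub hβ.ne', ← mul_div_assoc]
    have : 1 - exp (-(α - σ) * τ) ≤ 1 := by linarith [exp_pos (-(α - σ) * τ)]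
    exact div_le_div_of_nonneg_right (mul_le_of_le_one_right (by positivity) this) hβ.le
  rw [eq_exp_smul_add_integral_of_hasDerivAt hτ hg hy]
  refine (norm_add_le _ _).trans (add_le_add ?_ hintegral)
  rw [norm_smul]
  simpa using mul_le_mul_of_nonneg_right (hnorm_exp 0 hτ) (norm_nonneg (y 0))

variable {ν κ : ℂ} {α σ h_M M₀ R T : ℝ} {h : ℝ → ℝ} {y r : ℝ → E}

theorem exp_mul_norm_le_of_hasDerivAt_delay {U τ : ℝ} (hν : ν.re ≤ -α) (hσ : 0 ≤ σ)
    (hσα : σ < α) (hh : Continuous h) (hh_mem : ∀ s, 0 ≤ s → h s ∈ Icc 0 h_M)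
    (hr : Continuous r) (hy : Continuous y)
    (hode : ∀ s, 0 ≤ s → HasDerivAt y (ν • y s + κ • y (s - h s) + r s) s)
    (hy0 : ‖y 0‖ ≤ M₀) (hU : ∀ s ∈ Icc (-h_M) T, exp (σ * s) * ‖y s‖ ≤ U)
    (hR : ∀ s ∈ Icc 0 T, exp (-σ * (T - s)) * ‖r s‖ ≤ R) (hτ : τ ∈ Icc 0 T) :
    exp (σ * τ) * ‖y τ‖ ≤ M₀ + (‖κ‖ * exp (σ * h_M) * U + exp (σ * T) * R) / (α - σ) := by
  set F := ‖κ‖ * exp (σ * h_M) * U + exp (σ * T) * R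
  have hyτ := norm_le_of_hasDerivAt_of_re_le hν hσα hτ.1 (by fun_prop)
    (fun s hs => add_assoc (ν • y s) _ _ ▸ hode s hs.1)
    (fun s hs => norm_smul_delay_add_le hσ ⟨hs.1, hs.2.trans hτ.2⟩ (hh_mem s hs.1) hU
      (hR s ⟨hs.1, hs.2.trans hτ.2⟩))
  have e₁ : exp (σ * τ) * exp (-α * τ) = exp ((σ - α) * τ) := by rw [← exp_add]; ring_nf
  have e₂ : exp (σ * τ) * exp (-σ * τ) = 1 := by rw [← exp_add]; simp
  calc exp (σ * τ) * ‖y τ‖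
      ≤ exp (σ * τ) * (exp (-α * τ) * ‖y 0‖ + F * exp (-σ * τ) / (α - σ)) :=
        mul_le_mul_of_nonneg_left hyτ (exp_pos _).le
    _ = exp ((σ - α) * τ) * ‖y 0‖ + F / (α - σ) := by
        linear_combination ‖y 0‖ * e₁ + F / (α - σ) * e₂
    _ ≤ 1 * M₀ + F / (α - σ) := by
        gcongr
        exact exp_le_one_iff.mpr (mul_nonpos_of_nonpos_of_nonneg (by linarith) hτ.1)
    _ = M₀ + F / (α - σ) := by rw [one_mul]

theorem norm_le_of_hasDerivAt_delay (hν : ν.re ≤ -α) (hσ : 0 ≤ σ)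
    (hσα : σ + ‖κ‖ * exp (σ * h_M) < α) (hh : Continuous h)
    (hh_mem : ∀ s, 0 ≤ s → h s ∈ Icc 0 h_M) (hr : Continuous r) (hy : Continuous y)
    (hode : ∀ s, 0 ≤ s → HasDerivAt y (ν • y s + κ • y (s - h s) + r s) s) (hT : 0 ≤ T)
    (hM₀ : ∀ s ∈ Icc (-h_M) 0, ‖y s‖ ≤ M₀)
    (hR : ∀ s ∈ Icc 0 T, exp (-σ * (T - s)) * ‖r s‖ ≤ R) :
    ‖y T‖ ≤ ((α - σ) * exp (-σ * T) * M₀ + R) / (α - σ - ‖κ‖ * exp (σ * h_M)) := by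
  set β := α - σ
  set γ := ‖κ‖ * exp (σ * h_M)
  have hβ : 0 < β := by linarith [(by positivity : 0 ≤ γ)]
  have hh_M : 0 ≤ h_M := (hh_mem 0 le_rfl).1.trans (hh_mem 0 le_rfl).2
  obtain ⟨s₀, hs₀, hs₀_max⟩ := isCompact_Icc.exists_isMaxOn
    (nonempty_Icc.mpr (by linarith : -h_M ≤ T))
    (by fun_prop : Continuous fun s => exp (σ * s) * ‖y s‖).continuousOn
  set U := exp (σ * s₀) * ‖y s₀‖
  have hU_max : ∀ s ∈ Icc (-h_M) T, exp (σ * s) * ‖y s‖ ≤ U := fun s hs => hs₀_max hs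
  have hU : U ≤ M₀ + (γ * U + exp (σ * T) * R) / β := by
    rcases le_or_gt s₀ 0 with hneg | hpos
    · have hR0 : 0 ≤ R :=
        (by positivity : 0 ≤ exp (-σ * (T - T)) * ‖r T‖).trans (hR T ⟨hT, le_rfl⟩)
      have : 0 ≤ (γ * U + exp (σ * T) * R) / β := div_nonneg (by positivity) hβ.le
      calc U ≤ 1 * M₀ := mul_le_mul (exp_le_one_iff.mpr (by nlinarith))
              (hM₀ s₀ ⟨hs₀.1, hneg⟩) (norm_nonneg _) zero_le_one
        _ ≤ _ := by linarith
    · exact exp_mul_norm_le_of_hasDerivAt_delay hν hσ (by linarith) hh hh_mem hr hy hode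
        (hM₀ 0 ⟨by linarith, le_rfl⟩) hU_max hR ⟨hpos.le, hs₀.2⟩
  have hUβγ : (β - γ) * U ≤ β * M₀ + exp (σ * T) * R := by
    have := mul_le_mul_of_nonneg_left hU hβ.le
    rw [mul_add, mul_div_cancel₀ _ hβ.ne'] at this
    linarith
  have hyT : ‖y T‖ ≤ exp (-σ * T) * U :=
    calc ‖y T‖ = exp (-σ * T) * (exp (σ * T) * ‖y T‖) := by
          rw [← mul_assoc, ← exp_add, neg_mul, neg_add_cancel, exp_zero, one_mul]
      _ ≤ exp (-σ * T) * U := by gcongr; exact hU_max T ⟨by linarith, le_rfl⟩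
  have e : exp (-σ * T) * exp (σ * T) = 1 := by rw [← exp_add]; simp
  rw [le_div_iff₀ (by linarith)]
  calc ‖y T‖ * (β - γ) ≤ exp (-σ * T) * U * (β - γ) := by gcongr; linarith
    _ = exp (-σ * T) * ((β - γ) * U) := by ring
    _ ≤ exp (-σ * T) * (β * M₀ + exp (σ * T) * R) := by gcongr
    _ = β * exp (-σ * T) * M₀ + R := by linear_combination R * e

end ScalarEquations

theorem Matrix.exists_isUnit_mul_eq_diagonal_mul {K n : Type*} [Field K] [Fintype n]
    [DecidableEq n] {A : Matrix n n K} {μ : n → K} (hμ : Function.Injective μ)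
    (hA : A.charpoly = ∏ i, (X - C (μ i))) :
    ∃ W : Matrix n n K, IsUnit W ∧ W * A = diagonal μ * W := by
  have hev : ∀ i, Module.End.HasEigenvalue (toLin' Aᵀ) (μ i) := fun i => by
    rw [Module.End.hasEigenvalue_iff_isRoot_charpoly, charpoly_toLin', charpoly_transpose, hA,
      IsRoot, eval_prod]
    exact Finset.prod_eq_zero (Finset.mem_univ i) (by simp)
  choose w hw using fun i => (hev i).exists_hasEigenvector
  refine ⟨of w, linearIndependent_rows_iff_isUnit.mp
    (Module.End.eigenvectors_linearIndependent' (toLin' Aᵀ) μ hμ w hw), ?_⟩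
  ext i j
  have hwi : w i ᵥ* A = μ i • w i := by
    rw [← mulVec_transpose, ← toLin'_apply]; exact (hw i).apply_eq_smul
  rw [mul_apply_eq_vecMul, diagonal_mul]
  exact congrFun hwi j

theorem norm_ofReal_comp {n : Type*} [Fintype n] (v : n → ℝ) : ‖Complex.ofReal ∘ v‖ = ‖v‖ := by
  simp [Pi.norm_def, Function.comp_def, Complex.nnnorm_real]

theorem ofReal_comp_mulVec {m n : Type*} [Fintype n] (A : Matrix m n ℝ) (v : n → ℝ) :
    Complex.ofReal ∘ (A *ᵥ v) = A.map (algebraMap ℝ ℂ) *ᵥ (Complex.ofReal ∘ v) :=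
  funext fun i => RingHom.map_mulVec (algebraMap ℝ ℂ) A v i

theorem norm_mulVec_ofReal_apply_le {m n : Type*} [Fintype m] [Fintype n] (W : Matrix m n ℂ)
    (v : n → ℝ) (k : m) : ‖(W *ᵥ (Complex.ofReal ∘ v)) k‖ ≤ ‖W‖ * ‖v‖ :=
  (norm_le_pi_norm _ k).trans ((linfty_opNorm_mulVec W _).trans_eq (by rw [norm_ofReal_comp]))

theorem norm_le_norm_inv_mul_norm_mulVec_ofReal {n : Type*} [Fintype n] [DecidableEq n]
    {W : Matrix n n ℂ} (hW : IsUnit W) (v : n → ℝ) :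
    ‖v‖ ≤ ‖W⁻¹‖ * ‖W *ᵥ (Complex.ofReal ∘ v)‖ :=
  calc ‖v‖ = ‖W⁻¹ *ᵥ (W *ᵥ (Complex.ofReal ∘ v))‖ := by
        rw [mulVec_mulVec, nonsing_inv_mul _ ((isUnit_iff_isUnit_det W).mp hW), one_mulVec,
          norm_ofReal_comp]
    _ ≤ ‖W⁻¹‖ * ‖W *ᵥ (Complex.ofReal ∘ v)‖ := linfty_opNorm_mulVec _ _

theorem hasDerivAt_mulVec_ofReal_comp {m n : Type*} [Fintype m] (W : Matrix n m ℂ)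
    {x : ℝ → m → ℝ} {x' : m → ℝ} {t : ℝ} (hx : HasDerivAt x x' t) :
    HasDerivAt (fun s => W *ᵥ (Complex.ofReal ∘ x s)) (W *ᵥ (Complex.ofReal ∘ x')) t :=
  hasDerivAt_pi.mpr fun k => HasDerivAt.fun_sum fun j _ =>
    ((hasDerivAt_pi.mp hx j).ofReal_comp).const_mul (W k j)

theorem hasDerivAt_mulVec_ofReal_apply {n : Type*} [Fintype n] [DecidableEq n]
    {A : Matrix n n ℝ} {W : Matrix n n ℂ} {μ : n → ℂ}
    (hWA : W * A.map (algebraMap ℝ ℂ) = diagonal μ * W) {c t : ℝ} {x : ℝ → n → ℝ}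
    {v f : n → ℝ} (hx : HasDerivAt x (A *ᵥ x t + c • (v - x t) + f) t) (k : n) :
    HasDerivAt (fun s => (W *ᵥ (Complex.ofReal ∘ x s)) k)
      ((μ k - c) • (W *ᵥ (Complex.ofReal ∘ x t)) k + (c : ℂ) • (W *ᵥ (Complex.ofReal ∘ v)) k
        + (W *ᵥ (Complex.ofReal ∘ f)) k) t := by
  refine (hasDerivAt_pi.mp (hasDerivAt_mulVec_ofReal_comp W hx) k).congr_deriv ?_
  have hcomplexify : Complex.ofReal ∘ (A *ᵥ x t + c • (v - x t) + f)
      = A.map (algebraMap ℝ ℂ) *ᵥ (Complex.ofReal ∘ x t)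
        + (c : ℂ) • (Complex.ofReal ∘ v - Complex.ofReal ∘ x t) + Complex.ofReal ∘ f := by
    rw [← ofReal_comp_mulVec]; ext j; simp
  rw [hcomplexify, mulVec_add, mulVec_add, mulVec_smul, mulVec_sub, mulVec_mulVec, hWA,
    ← mulVec_mulVec]
  simp only [Pi.add_apply, Pi.smul_apply, Pi.sub_apply, mulVec_diagonal, smul_eq_mul]
  ring

theorem norm_le_of_hasDerivAt_delay_of_mul_eq_diagonal_mul {n : Type*} [Fintype n]
    [DecidableEq n] [Nonempty n] {A : Matrix n n ℝ} {W : Matrix n n ℂ} {μ : n → ℂ}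
    (hW : IsUnit W) (hWA : W * A.map (algebraMap ℝ ℂ) = diagonal μ * W)
    {c α σ h_M M₀ R t : ℝ} {h : ℝ → ℝ} {x q : ℝ → n → ℝ} (hμα : ∀ k, (μ k - c).re ≤ -α)
    (hσ : 0 ≤ σ) (hσα : σ + |c| * exp (σ * h_M) < α) (hh : Continuous h)
    (hh_mem : ∀ s, 0 ≤ s → h s ∈ Icc 0 h_M) (hq : Continuous q) (hx : Continuous x)
    (hx_ode : ∀ s, 0 ≤ s → HasDerivAt x (A *ᵥ x s + c • (x (s - h s) - x s) + q s) s)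
    (ht : 0 ≤ t) (hM₀ : ∀ s ∈ Icc (-h_M) 0, ‖x s‖ ≤ M₀)
    (hR : ∀ s ∈ Icc 0 t, exp (-σ * (t - s)) * ‖q s‖ ≤ R) :
    ‖x t‖ ≤ ‖W⁻¹‖ * (((α - σ) * exp (-σ * t) * (‖W‖ * M₀) + ‖W‖ * R)
      / (α - σ - |c| * exp (σ * h_M))) := by
  have hc : ‖(c : ℂ)‖ = |c| := by rw [Complex.norm_real, Real.norm_eq_abs]
  have hcomponent : ∀ k, ‖(W *ᵥ (Complex.ofReal ∘ x t)) k‖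
      ≤ ((α - σ) * exp (-σ * t) * (‖W‖ * M₀) + ‖W‖ * R) / (α - σ - |c| * exp (σ * h_M)) :=
    fun k => hc ▸ norm_le_of_hasDerivAt_delay (κ := (c : ℂ)) (hμα k) hσ (by rwa [hc]) hh
      hh_mem (by fun_prop) (by fun_prop)
      (fun s hs => hasDerivAt_mulVec_ofReal_apply hWA (hx_ode s hs) k) ht
      (fun s hs => (norm_mulVec_ofReal_apply_le W _ k).trans
        (mul_le_mul_of_nonneg_left (hM₀ s hs) (norm_nonneg W)))
      (fun s hs => calc
        _ ≤ exp (-σ * (t - s)) * (‖W‖ * ‖q s‖) := by gcongr; exact norm_mulVec_ofReal_apply_le ..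
        _ = ‖W‖ * (exp (-σ * (t - s)) * ‖q s‖) := by ring
        _ ≤ ‖W‖ * R := by gcongr; exact hR s hs)
  calc ‖x t‖ ≤ ‖W⁻¹‖ * ‖W *ᵥ (Complex.ofReal ∘ x t)‖ := norm_le_norm_inv_mul_norm_mulVec_ofReal hW _
    _ ≤ _ := by gcongr; exact (pi_norm_le_iff_of_nonempty _).mpr hcomponent

theorem exists_lt_forall_le_of_finite {ι : Type*} [Finite ι] {a : ℝ} {f : ι → ℝ}
    (hf : ∀ i, a < f i) : ∃ b, a < b ∧ ∀ i, b ≤ f i := by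
  have hlt : ∀ᶠ b in 𝓝 a, ∀ i, b < f i := eventually_all.mpr fun i => eventually_lt_nhds (hf i)
  obtain ⟨b, hb, hab⟩ := ((hlt.filter_mono nhdsWithin_le_nhds).and eventually_mem_nhdsWithin).exists
    (f := 𝓝[>] a)
  exact ⟨b, hab, fun i => (hb i).le⟩

theorem exists_pos_add_mul_exp_lt {a α : ℝ} (ha : a < α) (b : ℝ) :
    ∃ σ, 0 < σ ∧ σ + a * exp (σ * b) < α := by
  have hlt : ∀ᶠ σ in 𝓝 0, σ + a * exp (σ * b) < α :=
    (by fun_prop : ContinuousAt (fun σ => σ + a * exp (σ * b)) 0).eventually_lt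
      continuousAt_const (by simpa using ha)
  exact (eventually_mem_nhdsWithin.and (hlt.filter_mono nhdsWithin_le_nhds)).exists (f := 𝓝[>] 0)

theorem IsCompact.le_ciSup_of_continuousOn {α : Type*} [TopologicalSpace α] {K : Set α}
    (hK : IsCompact K) {f : α → ℝ} (hf : ContinuousOn f K) {s : α} (hs : s ∈ K) :
    f s ≤ ⨆ x : K, f x :=
  le_ciSup (f := fun x : K => f x) (by simpa [← image_eq_range] using hK.bddAbove_image hf) ⟨s, hs⟩

theorem ISS_truncated_delay_model_general
    (N : ℕ) (hN : 1 ≤ N) (h_m h_M : ℝ) (hm : 0 < h_m)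
    (c : ℝ) (A : Matrix (Fin N) (Fin N) ℝ)
    (μ : Fin N → ℂ) (hμ_inj : Function.Injective μ)
    (hμ_char : (A.map (algebraMap ℝ ℂ)).charpoly = ∏ i : Fin N, (X - C (μ i)))
    (hμ_re : ∀ i, (μ i).re < -3 * |c|) :
    ∃ σ C₀ C₁ : ℝ, 0 < σ ∧ 0 < C₀ ∧ 0 < C₁ ∧
      ∀ (x₀ : ℝ → (Fin N → ℝ)), ContinuousOn x₀ (Icc (-h_M) 0) →
      ∀ (h : ℝ → ℝ), Continuous h → (∀ t, 0 ≤ t → h t ∈ Icc h_m h_M) →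
      ∀ (q : ℝ → (Fin N → ℝ)), Continuous q →
      ∀ (x : ℝ → (Fin N → ℝ)), Continuous x →
        (∀ τ ∈ Icc (-h_M) (0 : ℝ), x τ = x₀ τ) →
        (∀ t : ℝ, 0 ≤ t →
          HasDerivAt x (A.mulVec (x t) + c • (x (t - h t) - x t) + q t) t) →
        ∀ t : ℝ, 0 ≤ t →
          ‖x t‖ ≤ C₀ * Real.exp (-σ * t) * (⨆ τ : Icc (-h_M) (0 : ℝ), ‖x₀ τ‖)
            + C₁ * ⨆ τ : Icc (0 : ℝ) t, Real.exp (-σ * (t - τ)) * ‖q τ‖ := by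
  have : Nonempty (Fin N) := Fin.pos_iff_nonempty.mp hN
  obtain ⟨W, hW, hWA⟩ := Matrix.exists_isUnit_mul_eq_diagonal_mul hμ_inj hμ_char
  obtain ⟨α, hcα, hμα⟩ := exists_lt_forall_le_of_finite (a := |c|) (f := fun k => -(μ k - c).re)
    fun k => by
      simp only [Complex.sub_re, Complex.ofReal_re]
      linarith [hμ_re k, neg_abs_le c, abs_nonneg c]
  obtain ⟨σ, hσ, hσα⟩ := exists_pos_add_mul_exp_lt hcα h_M
  have hD : 0 < α - σ - |c| * exp (σ * h_M) := by linarith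
  have hW₀ : 0 < ‖W⁻¹‖ * ‖W‖ := mul_pos (norm_pos_iff.mpr (isUnit_nonsing_inv_iff.mpr hW).ne_zero)
    (norm_pos_iff.mpr hW.ne_zero)
  refine ⟨σ, ‖W⁻¹‖ * ‖W‖ * (α - σ) / (α - σ - |c| * exp (σ * h_M)),
    ‖W⁻¹‖ * ‖W‖ / (α - σ - |c| * exp (σ * h_M)), hσ,
    div_pos (mul_pos hW₀ (by linarith [(by positivity : 0 ≤ |c| * exp (σ * h_M))])) hD,
    div_pos hW₀ hD, fun x₀ hx₀ h hh hh_mem q hq x hx hx_init hx_ode t ht => ?_⟩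
  refine (norm_le_of_hasDerivAt_delay_of_mul_eq_diagonal_mul hW hWA (fun k => le_neg.mp (hμα k))
    hσ.le hσα hh (fun s hs => Icc_subset_Icc hm.le le_rfl (hh_mem s hs)) hq hx hx_ode ht
    (fun s hs => hx_init s hs ▸ isCompact_Icc.le_ciSup_of_continuousOn hx₀.norm hs)
    (fun s hs => isCompact_Icc.le_ciSup_of_continuousOn
      (f := fun s => exp (-σ * (t - s)) * ‖q s‖) (by fun_prop) hs)).trans_eq ?_
  ring

theorem ISS_truncated_delay_model
    (N : ℕ) (hN : 1 ≤ N) (h_m h_M : ℝ) (hm : 0 < h_m) (hmM : h_m < h_M)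
    (c : ℝ) (A : Matrix (Fin N) (Fin N) ℝ)
    (μ : Fin N → ℂ) (hμ_inj : Function.Injective μ)
    (hμ_char : (A.map (algebraMap ℝ ℂ)).charpoly = ∏ i : Fin N, (X - C (μ i)))
    (hμ_re : ∀ i, (μ i).re < -3 * |c|) :
    ∃ σ C₀ C₁ : ℝ, 0 < σ ∧ 0 < C₀ ∧ 0 < C₁ ∧
      ∀ (x₀ : ℝ → (Fin N → ℝ)), ContinuousOn x₀ (Icc (-h_M) 0) →
      ∀ (h : ℝ → ℝ), Continuous h → (∀ t, 0 ≤ t → h t ∈ Icc h_m h_M) →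
      ∀ (q : ℝ → (Fin N → ℝ)), Continuous q →
      ∀ (x : ℝ → (Fin N → ℝ)), Continuous x →
        (∀ τ ∈ Icc (-h_M) (0 : ℝ), x τ = x₀ τ) →
        (∀ t : ℝ, 0 ≤ t →
          HasDerivAt x (A.mulVec (x t) + c • (x (t - h t) - x t) + q t) t) →
        ∀ t : ℝ, 0 ≤ t →
          ‖x t‖ ≤ C₀ * Real.exp (-σ * t) * (⨆ τ : Icc (-h_M) (0 : ℝ), ‖x₀ τ‖)
            + C₁ * ⨆ τ : Icc (0 : ℝ) t, Real.exp (-σ * (t - τ)) * ‖q τ‖ :=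
  ISS_truncated_delay_model_general N hN h_m h_M hm c A μ hμ_inj hμ_char hμ_re
end

section
/- Let η > κ > 0 and λ ≤ −2η. Then for every continuous function u : ℝ → ℝ, all t ∈ ℝ and all h ∈ [0, h_M], the inequality |λ ∫_{t−h}^{t} e^{λ(t−τ)} u(τ) dτ| ≤ (2η/(2η−κ)) · sup_{τ∈[t−h,t]} e^{−κ(t−τ)} |u(τ)| holds. -/
open Real Set

set_option maxHeartbeats 1000000 in
theorem integral_estimate_without_derivative
    (η κ lam h_M : ℝ) (hκ : 0 < κ) (hηκ : κ < η) (hlam : lam ≤ -2 * η)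
    (u : ℝ → ℝ) (hu : Continuous u) (t : ℝ) (h : ℝ) (hh : h ∈ Icc 0 h_M) :
    |lam * ∫ τ in (t - h)..t, Real.exp (lam * (t - τ)) * u τ|
      ≤ (2 * η / (2 * η - κ)) * ⨆ τ : Icc (t - h) t, Real.exp (-κ * (t - τ)) * |u τ| := by
  obtain ⟨hh0, hhM⟩ := hh
  have hab : t - h ≤ t := by linarith
  set g : ℝ → ℝ := fun τ => Real.exp (-κ * (t - τ)) * |u τ| with hg
  have hgc : Continuous g := by
    apply Continuous.mul
    · exact Real.continuous_exp.comp (by continuity)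
    · exact hu.abs
  have htmem : t ∈ Icc (t - h) t := ⟨by linarith, le_refl t⟩
  haveI : Nonempty (Icc (t - h) t) := ⟨⟨t, htmem⟩⟩
  have hbdd : BddAbove (Set.range fun τ : Icc (t - h) t => g τ) := by
    have h1 := (isCompact_Icc (a := t - h) (b := t)).bddAbove_image hgc.continuousOn
    have h2 : (Set.range fun τ : Icc (t - h) t => g τ) = g '' Icc (t - h) t := by
      ext x
      simp [Set.mem_image, Subtype.exists]
    rwa [h2]
  set M := ⨆ τ : Icc (t - h) t, g τ with hM
  have hle : ∀ τ ∈ Icc (t - h) t, g τ ≤ M := fun τ hτ => le_ciSup hbdd ⟨τ, hτ⟩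
  have hM0 : 0 ≤ M := le_trans (by positivity) (hle t htmem)
  have hc : lam + κ < 0 := by linarith
  have hlam0 : lam < 0 := by linarith
  -- pointwise bound
  have hpt : ∀ τ ∈ Icc (t - h) t,
      |Real.exp (lam * (t - τ)) * u τ| ≤ Real.exp ((lam + κ) * (t - τ)) * M := by
    intro τ hτ
    have : |Real.exp (lam * (t - τ)) * u τ|
        = Real.exp ((lam + κ) * (t - τ)) * g τ := by
      rw [abs_mul, abs_of_pos (Real.exp_pos _), hg]
      simp only []
      rw [← mul_assoc, ← Real.exp_add]
      ring_nf
    rw [this]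
    exact mul_le_mul_of_nonneg_left (hle τ hτ) (le_of_lt (Real.exp_pos _))
  -- integral bound
  have hint1 : |∫ τ in (t - h)..t, Real.exp (lam * (t - τ)) * u τ|
      ≤ ∫ τ in (t - h)..t, |Real.exp (lam * (t - τ)) * u τ| :=
    intervalIntegral.abs_integral_le_integral_abs hab
  have hcont1 : Continuous fun τ => Real.exp (lam * (t - τ)) * u τ := by
    apply Continuous.mul
    · exact Real.continuous_exp.comp (by continuity)
    · exact hu
  have hcont2 : Continuous fun τ => Real.exp ((lam + κ) * (t - τ)) * M := by
    apply Continuous.mul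
    · exact Real.continuous_exp.comp (by continuity)
    · exact continuous_const
  have hint2 : (∫ τ in (t - h)..t, |Real.exp (lam * (t - τ)) * u τ|)
      ≤ ∫ τ in (t - h)..t, Real.exp ((lam + κ) * (t - τ)) * M := by
    apply intervalIntegral.integral_mono_on hab
    · exact (hcont1.abs).intervalIntegrable _ _
    · exact hcont2.intervalIntegrable _ _
    · exact hpt
  -- compute the exponential integral
  have hJ : (∫ τ in (t - h)..t, Real.exp ((lam + κ) * (t - τ)))
      = (Real.exp ((lam + κ) * h) - 1) / (lam + κ) := by
    have := intervalIntegral.integral_comp_sub_left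
      (a := t - h) (b := t) (fun s => Real.exp ((lam + κ) * s)) t
    rw [this]
    simp only [sub_self, sub_sub_cancel]
    rw [intervalIntegral.integral_comp_mul_left (fun s => Real.exp s) (ne_of_lt hc)]
    rw [integral_exp, smul_eq_mul, mul_zero, Real.exp_zero]
    ring
  have hJle : (∫ τ in (t - h)..t, Real.exp ((lam + κ) * (t - τ))) ≤ 1 / (-(lam + κ)) := by
    rw [hJ]
    have hpos : (0:ℝ) < -(lam + κ) := by linarith
    have heq : (Real.exp ((lam + κ) * h) - 1) / (lam + κ)
        = (1 - Real.exp ((lam + κ) * h)) / (-(lam + κ)) := by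
      rw [div_eq_div_iff (ne_of_lt hc) (ne_of_gt hpos)]
      ring
    rw [heq]
    gcongr
    linarith [Real.exp_pos ((lam + κ) * h)]
  have hInt3 : (∫ τ in (t - h)..t, Real.exp ((lam + κ) * (t - τ)) * M)
      = (∫ τ in (t - h)..t, Real.exp ((lam + κ) * (t - τ))) * M := by
    rw [← intervalIntegral.integral_mul_const]
  calc |lam * ∫ τ in (t - h)..t, Real.exp (lam * (t - τ)) * u τ|
      = (-lam) * |∫ τ in (t - h)..t, Real.exp (lam * (t - τ)) * u τ| := by
        rw [abs_mul, abs_of_neg hlam0]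
    _ ≤ (-lam) * ((∫ τ in (t - h)..t, Real.exp ((lam + κ) * (t - τ))) * M) := by
        apply mul_le_mul_of_nonneg_left _ (by linarith)
        rw [← hInt3]
        exact le_trans hint1 hint2
    _ ≤ (-lam) * ((1 / (-(lam + κ))) * M) := by
        apply mul_le_mul_of_nonneg_left _ (by linarith)
        exact mul_le_mul_of_nonneg_right hJle hM0
    _ = ((-lam) * (1 / (-(lam + κ)))) * M := by ring
    _ ≤ (2 * η / (2 * η - κ)) * M := by
        apply mul_le_mul_of_nonneg_right _ hM0
        have h1 : 0 < -(lam + κ) := by linarith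
        have h2 : 0 < 2 * η - κ := by linarith
        rw [mul_one_div, div_le_div_iff₀ h1 h2]
        nlinarith
end

section
/- Let A ∈ ℝ^{N×N}, B ∈ ℝ^N, C ∈ ℝ^{1×N}, α ∈ ℝ, and define A_a = [[A, 0],[C, 0]] ∈ ℝ^{(N+1)×(N+1)} and B_a = [B; α] ∈ ℝ^{N+1}. Then the pair (A_a, B_a) is controllable (satisfies the Kalman rank condition) if and only if (A, B) is controllable and the matrix T = [[A, B],[C, α]] ∈ ℝ^{(N+1)×(N+1)} is invertible. -/
open Matrix Set

/-- The Kalman controllability condition: the iterated images `A^k B` span the whole space. -/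
def KalmanCondition {n : Type*} [Fintype n] [DecidableEq n]
    (A : Matrix n n ℝ) (B : n → ℝ) : Prop :=
  Submodule.span ℝ (Set.range fun k : ℕ => (A ^ k).mulVec B) = ⊤

/-- Auxiliary vectors: preimages of the augmented Kalman generators under `T`. -/
def augVec {N : ℕ} (A : Matrix (Fin N) (Fin N) ℝ) (B : Fin N → ℝ) :
    ℕ → (Fin N ⊕ Fin 1 → ℝ)
  | 0 => Sum.elim 0 1
  | (n + 1) => Sum.elim ((A ^ n).mulVec B) 0

lemma augVec_span_iff {N : ℕ} (A : Matrix (Fin N) (Fin N) ℝ) (B : Fin N → ℝ) :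
    Submodule.span ℝ (Set.range (augVec A B)) = ⊤ ↔ KalmanCondition A B := by
  constructor
  · intro h
    -- project to the first component
    set P : (Fin N ⊕ Fin 1 → ℝ) →ₗ[ℝ] (Fin N → ℝ) := LinearMap.funLeft ℝ ℝ Sum.inl with hP
    have hPsurj : Function.Surjective P :=
      LinearMap.funLeft_surjective_of_injective ℝ ℝ _ Sum.inl_injective
    have htop : Submodule.map P (Submodule.span ℝ (Set.range (augVec A B))) = ⊤ := by
      rw [h, Submodule.map_top, LinearMap.range_eq_top.mpr hPsurj]
    rw [Submodule.map_span] at htop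
    unfold KalmanCondition
    rw [eq_top_iff, ← htop]
    apply Submodule.span_le.mpr
    rintro x ⟨-, ⟨k, rfl⟩, rfl⟩
    cases k with
    | zero =>
        have : P (augVec A B 0) = 0 := by
          funext i; simp [augVec, hP, LinearMap.funLeft]
        rw [this]; exact Submodule.zero_mem _
    | succ n =>
        have : P (augVec A B (n + 1)) = (A ^ n).mulVec B := by
          funext i; simp [augVec, hP, LinearMap.funLeft]
        rw [this]
        exact Submodule.subset_span ⟨n, rfl⟩
  · intro hK
    rw [eq_top_iff]
    rintro w -
    have hsplit : w = (Sum.elim (fun i => w (Sum.inl i)) 0 : Fin N ⊕ Fin 1 → ℝ)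
        + w (Sum.inr 0) • augVec A B 0 := by
      funext x
      cases x with
      | inl i => simp [augVec]
      | inr j =>
          have : j = 0 := Subsingleton.elim _ _
          subst this
          simp [augVec]
    rw [hsplit]
    refine Submodule.add_mem _ ?_ (Submodule.smul_mem _ _ (Submodule.subset_span ⟨0, rfl⟩))
    -- the first part: use that w ∘ inl lies in the Kalman span
    have hw : (fun i => w (Sum.inl i)) ∈
        Submodule.span ℝ (Set.range fun k : ℕ => (A ^ k).mulVec B) := by
      rw [hK]; trivial
    -- push forward through the linear inclusion x ↦ Sum.elim x 0
    let J : (Fin N → ℝ) →ₗ[ℝ] (Fin N ⊕ Fin 1 → ℝ) :=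
      { toFun := fun x => Sum.elim x 0
        map_add' := by
          intro x y; funext z; cases z <;> simp
        map_smul' := by
          intro c x; funext z; cases z <;> simp }
    have hmap : Submodule.map J (Submodule.span ℝ (Set.range fun k : ℕ => (A ^ k).mulVec B)) ≤
        Submodule.span ℝ (Set.range (augVec A B)) := by
      rw [Submodule.map_span, Submodule.span_le]
      rintro x ⟨-, ⟨k, rfl⟩, rfl⟩
      exact Submodule.subset_span ⟨k + 1, rfl⟩
    exact hmap (Submodule.mem_map_of_mem hw)

theorem augmented_kalman_iff
    (N : ℕ) (A : Matrix (Fin N) (Fin N) ℝ) (B : Fin N → ℝ)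
    (C : Matrix (Fin 1) (Fin N) ℝ) (α : ℝ) :
    KalmanCondition
        (Matrix.fromBlocks A 0 C 0)
        (Sum.elim B fun _ : Fin 1 => α)
      ↔ KalmanCondition A B ∧
        IsUnit (Matrix.fromBlocks A (Matrix.of fun i (_ : Fin 1) => B i)
          C (Matrix.of fun (_ : Fin 1) (_ : Fin 1) => α)).det := by
  set T : Matrix (Fin N ⊕ Fin 1) (Fin N ⊕ Fin 1) ℝ :=
    Matrix.fromBlocks A (Matrix.of fun i (_ : Fin 1) => B i)
      C (Matrix.of fun (_ : Fin 1) (_ : Fin 1) => α) with hT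
  -- powers of the augmented matrix
  have hpow : ∀ k : ℕ,
      (Matrix.fromBlocks A 0 C 0 : Matrix (Fin N ⊕ Fin 1) (Fin N ⊕ Fin 1) ℝ) ^ (k + 1)
      = Matrix.fromBlocks (A ^ (k + 1)) 0 (C * A ^ k) 0 := by
    intro k
    induction k with
    | zero => simp [Matrix.fromBlocks_multiply]
    | succ n ih =>
        rw [pow_succ, ih, Matrix.fromBlocks_multiply]
        simp [pow_succ, Matrix.mul_assoc]
  -- the generators of the augmented span are `T` applied to `augVec`
  have hvec : ∀ k : ℕ,
      ((Matrix.fromBlocks A 0 C 0) ^ k).mulVec (Sum.elim B fun _ : Fin 1 => α)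
        = T.mulVecLin (augVec A B k) := by
    intro k
    cases k with
    | zero =>
        rw [pow_zero, Matrix.one_mulVec]
        funext x
        cases x with
        | inl i =>
            simp [augVec, hT, Matrix.fromBlocks_mulVec, Matrix.mulVec, dotProduct,
              Fin.sum_univ_one]
        | inr j =>
            simp [augVec, hT, Matrix.fromBlocks_mulVec, Matrix.mulVec, dotProduct,
              Fin.sum_univ_one]
    | succ n =>
        rw [hpow n]
        funext x
        cases x with
        | inl i =>
            simp [augVec, hT, Matrix.fromBlocks_mulVec, pow_succ', Matrix.mulVec_mulVec]
        | inr j =>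
            simp [augVec, hT, Matrix.fromBlocks_mulVec, Matrix.mulVec_mulVec]
  have hrange : (Set.range fun k : ℕ =>
      ((Matrix.fromBlocks A 0 C 0) ^ k).mulVec (Sum.elim B fun _ : Fin 1 => α))
      = T.mulVecLin '' Set.range (augVec A B) := by
    rw [show (fun k : ℕ =>
        ((Matrix.fromBlocks A 0 C 0) ^ k).mulVec (Sum.elim B fun _ : Fin 1 => α))
        = (⇑T.mulVecLin ∘ augVec A B) from funext hvec, Set.range_comp]
  unfold KalmanCondition
  rw [hrange, Submodule.span_image]
  constructor
  · intro h
    have hsurj : Function.Surjective T.mulVec := by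
      intro y
      have hy : y ∈ Submodule.map T.mulVecLin
          (Submodule.span ℝ (Set.range (augVec A B))) := h ▸ Submodule.mem_top
      obtain ⟨x, -, hx⟩ := hy
      exact ⟨x, hx⟩
    have hdet : IsUnit T.det :=
      (Matrix.isUnit_iff_isUnit_det T).mp (Matrix.mulVec_surjective_iff_isUnit.mp hsurj)
    refine ⟨(augVec_span_iff A B).mp ?_, hdet⟩
    have hinj : Function.Injective T.mulVecLin :=
      Matrix.mulVec_injective_iff_isUnit.mpr ((Matrix.isUnit_iff_isUnit_det T).mpr hdet)
    have htop : Submodule.map T.mulVecLin (⊤ : Submodule ℝ (Fin N ⊕ Fin 1 → ℝ)) = ⊤ := by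
      rw [Submodule.map_top, LinearMap.range_eq_top.mpr hsurj]
    exact Submodule.map_injective_of_injective hinj (h.trans htop.symm)
  · rintro ⟨hspan0, hdet⟩
    have hspan := (augVec_span_iff A B).mpr hspan0
    have hsurj : Function.Surjective T.mulVec :=
      Matrix.mulVec_surjective_iff_isUnit.mpr ((Matrix.isUnit_iff_isUnit_det T).mpr hdet)
    rw [hspan, Submodule.map_top, LinearMap.range_eq_top.mpr hsurj]
end

section
/- Let (e_n)_{n≥0} be an orthonormal basis of L²(0,1) consisting of functions e_n(x) = γ_n sin(r_n x) with γ_n = 2√(r_n/(2r_n − sin 2r_n)) and r_n as above, and let (λ_n) be the associated eigenvalues with λ_n ∼ −a n² π². If f ∈ L²(0,1) satisfies ∑_{n≥0} |λ_n|² |⟨f, e_n⟩|² < ∞, then the series ∑_{n≥0} ⟨f, e_n⟩ e_n(1) converges absolutely and equals f(1) (where f has a continuous representative). -/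
/-!
Eventually `|λ_n| ≥ κ n²` with `κ > 0`, so `|c_n| ≤ λ_n² c_n² + λ_n⁻²` makes the
coefficients `c_n = ⟪f, e_n⟫` absolutely summable. The amplitudes `γ_n` are bounded, hence
`∑ c_n γ_n sin (r_n x)` converges in sup norm to a bounded continuous function `Φ`. On a finite
measure space sup-norm convergence implies `L²` convergence, so `Φ` represents `f`; two
continuous representatives agree on `[0, 1]`, in particular at `1`.
-/

open Real Set Filter MeasureTheory
open scoped BoundedContinuousFunction

theorem HilbertBasis.coeFn_ae_eq_tsum_of_summable
    {α ι : Type*} [MeasurableSpace α] [TopologicalSpace α] [BorelSpace α]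
    [SecondCountableTopologyEither α ℝ] {μ : Measure α} [IsFiniteMeasure μ]
    (b : HilbertBasis ι ℝ (Lp ℝ 2 μ)) {φ : ι → α →ᵇ ℝ} (hφ : ∀ i, (b i : α → ℝ) =ᵐ[μ] φ i)
    (f : Lp ℝ 2 μ) (hf : Summable fun i => ‖b.repr f i • φ i‖) :
    (f : α → ℝ) =ᵐ[μ] ⇑(∑' i, b.repr f i • φ i) := by
  let T : (α →ᵇ ℝ) →L[ℝ] Lp ℝ 2 μ := BoundedContinuousFunction.toLp 2 μ ℝ
  have hTφ : ∀ i, T (φ i) = b i := fun i =>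
    Lp.ext ((BoundedContinuousFunction.coeFn_toLp (E := ℝ) 2 μ ℝ (φ i)).trans (hφ i).symm)
  set Φ := ∑' i, b.repr f i • φ i
  have hfΦ : f = T Φ := (b.hasSum_repr f).unique <| by
    simpa only [map_smul, hTφ] using hf.of_norm.hasSum.mapL T
  rw [hfΦ]
  exact BoundedContinuousFunction.coeFn_toLp (E := ℝ) 2 μ ℝ _

theorem eventually_abs_le_two_mul_abs_of_tendsto_div {ι : Type*} {l : Filter ι} {u v : ι → ℝ}
    (h : Tendsto (fun i => u i / v i) l (nhds 1)) : ∀ᶠ i in l, |v i| ≤ 2 * |u i| := by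
  filter_upwards [h.eventually (lt_mem_nhds one_half_lt_one)] with i hi
  rcases eq_or_ne (v i) 0 with hv | hv
  · rw [hv, div_zero] at hi; norm_num at hi
  · have : |v i| * (1 / 2) ≤ |v i| * |u i / v i| :=
      mul_le_mul_of_nonneg_left (hi.le.trans (le_abs_self _)) (abs_nonneg _)
    rw [abs_div, mul_div_cancel₀ _ (abs_ne_zero.mpr hv)] at this
    linarith

theorem summable_abs_of_summable_sq_mul_sq {w c : ℕ → ℝ} {κ : ℝ} (hκ : 0 < κ)
    (hw : ∀ᶠ n in atTop, κ * n ^ 2 ≤ |w n|) (hwc : Summable fun n => |w n| ^ 2 * c n ^ 2) :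
    Summable fun n => |c n| := by
  have hinv : Summable fun n : ℕ => ((κ * n ^ 2) ^ 2)⁻¹ := by
    simpa only [mul_pow, ← pow_mul, mul_inv] using
      (summable_nat_pow_inv.mpr (by norm_num : 1 < 2 * 2)).mul_left (κ ^ 2)⁻¹
  refine (hwc.add hinv).of_norm_bounded_eventually_nat ?_
  filter_upwards [hw, eventually_ge_atTop 1] with n hn hn1
  have hd : 0 < κ * n ^ 2 := by positivity
  set d := κ * (n : ℝ) ^ 2
  -- `|c| = (|w| |c|) (1 / d) ≤ (|w| |c|)² + (1 / d)²`
  have hcd : |c n| = |c n| * d * d⁻¹ := by field_simp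
  rw [norm_abs_eq_norm, Real.norm_eq_abs, hcd, ← inv_pow]
  nlinarith [two_mul_le_add_sq (|w n| * |c n|) d⁻¹,
    mul_le_mul_of_nonneg_left hn (abs_nonneg (c n)), inv_pos.mpr hd, sq_abs (c n),
    abs_nonneg (c n), abs_nonneg (w n)]

/-- `sineAmplitude ρ` normalises `x ↦ sin (ρ x)` in `L²(0,1)`, since
`∫₀¹ sin² (ρ x) dx = (2ρ - sin 2ρ) / (4ρ)`. -/
noncomputable def sineAmplitude (ρ : ℝ) : ℝ := 2 * √(ρ / (2 * ρ - sin (2 * ρ)))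

theorem sineAmplitude_nonneg (ρ : ℝ) : 0 ≤ sineAmplitude ρ := by
  unfold sineAmplitude; positivity

theorem sineAmplitude_le_two {ρ : ℝ} (hρ : 1 ≤ ρ) : sineAmplitude ρ ≤ 2 := by
  have hsin := sin_le_one (2 * ρ)
  have hρ_le : ρ / (2 * ρ - sin (2 * ρ)) ≤ 1 := (div_le_one (by linarith)).mpr (by linarith)
  unfold sineAmplitude
  linarith [sqrt_le_one.mpr hρ_le]

theorem sineAmplitude_le_of_nat_mul_pi_lt {r : ℕ → ℝ} (hr : ∀ n : ℕ, n * π < r n) (n : ℕ) :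
    sineAmplitude (r n) ≤ max (sineAmplitude (r 0)) 2 := by
  rcases n with _ | n
  · exact le_max_left _ _
  · refine (sineAmplitude_le_two ?_).trans (le_max_right _ _)
    have hn : π ≤ ((n + 1 : ℕ) : ℝ) * π := le_mul_of_one_le_left pi_pos.le (by simp)
    linarith [hr (n + 1), pi_gt_three]

noncomputable def sineMode (A ω : ℝ) : ℝ →ᵇ ℝ :=
  .ofNormedAddCommGroup (fun x => A * sin (ω * x)) (by fun_prop) |A| fun x => by
    rw [norm_mul, Real.norm_eq_abs, Real.norm_eq_abs]
    exact mul_le_of_le_one_right (abs_nonneg A) (abs_sin_le_one _)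

theorem norm_sineMode_le (A ω : ℝ) : ‖sineMode A ω‖ ≤ |A| :=
  BoundedContinuousFunction.norm_ofNormedAddCommGroup_le _ (abs_nonneg A) _

theorem trace_series_expansion_general
    (θ : ℝ) (a : ℝ) (ha : 0 < a)
    (r : ℕ → ℝ)
    (hr : ∀ n : ℕ, r n ∈ Ioo (n * π) ((n + 1) * π) ∧
      r n * (Real.cos (r n) / Real.sin (r n)) = -(Real.cos θ / Real.sin θ))
    (lam : ℕ → ℝ)
    (hlam : Tendsto (fun n : ℕ => lam n / (-(a * (n : ℝ) ^ 2 * π ^ 2))) atTop (nhds 1))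
    (e : HilbertBasis ℕ ℝ (Lp ℝ 2 (volume.restrict (Ioo (0:ℝ) 1))))
    (he : ∀ n : ℕ,
      (e n : Lp ℝ 2 (volume.restrict (Ioo (0:ℝ) 1)))
        =ᵐ[volume.restrict (Ioo (0:ℝ) 1)]
      fun x => 2 * Real.sqrt (r n / (2 * r n - Real.sin (2 * r n))) * Real.sin (r n * x))
    (f : Lp ℝ 2 (volume.restrict (Ioo (0:ℝ) 1)))
    (hf : Summable (fun n : ℕ =>
      |lam n| ^ 2 * (inner (𝕜 := ℝ) f (e n : Lp ℝ 2 (volume.restrict (Ioo (0:ℝ) 1)))) ^ 2))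
    (F : ℝ → ℝ) (hF : ContinuousOn F (Icc 0 1))
    (hrep : (f : ℝ → ℝ) =ᵐ[volume.restrict (Ioo (0:ℝ) 1)] F) :
    Summable (fun n : ℕ =>
      |inner (𝕜 := ℝ) f (e n : Lp ℝ 2 (volume.restrict (Ioo (0:ℝ) 1)))
        * (2 * Real.sqrt (r n / (2 * r n - Real.sin (2 * r n))) * Real.sin (r n * 1))|) ∧
    ∑' n : ℕ,
      inner (𝕜 := ℝ) f (e n : Lp ℝ 2 (volume.restrict (Ioo (0:ℝ) 1)))
        * (2 * Real.sqrt (r n / (2 * r n - Real.sin (2 * r n))) * Real.sin (r n * 1))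
      = F 1 := by
  have hcoeff : ∀ n, inner (𝕜 := ℝ) f (e n) = e.repr f n := fun n => by
    rw [e.repr_apply_apply, real_inner_comm]
  simp only [hcoeff] at hf ⊢
  set φ : ℕ → ℝ →ᵇ ℝ := fun n => sineMode (sineAmplitude (r n)) (r n)
  set C := max (sineAmplitude (r 0)) 2
  have hφC : ∀ n, ‖φ n‖ ≤ C := fun n => (norm_sineMode_le _ _).trans <| by
    rw [abs_of_nonneg (sineAmplitude_nonneg _)]
    exact sineAmplitude_le_of_nat_mul_pi_lt (fun n => (hr n).1.1) n
  have hlam_growth : ∀ᶠ n in atTop, a * π ^ 2 / 2 * n ^ 2 ≤ |lam n| := by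
    filter_upwards [eventually_abs_le_two_mul_abs_of_tendsto_div hlam] with n hn
    rw [abs_neg, abs_of_nonneg (by positivity)] at hn
    linarith
  have hc : Summable fun n => |e.repr f n| :=
    summable_abs_of_summable_sq_mul_sq (by positivity) hlam_growth hf
  have hcφ : Summable fun n => ‖e.repr f n • φ n‖ :=
    (hc.mul_right C).of_nonneg_of_le (fun _ => norm_nonneg _) fun n => by
      rw [norm_smul, Real.norm_eq_abs]
      exact mul_le_mul_of_nonneg_left (hφC n) (abs_nonneg _)
  refine ⟨hcφ.of_nonneg_of_le (fun _ => abs_nonneg _) fun n =>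
    (e.repr f n • φ n).norm_coe_le_norm 1, ?_⟩
  set Φ := ∑' n, e.repr f n • φ n
  have hΦF : EqOn Φ F (Icc 0 1) := by
    refine Measure.eqOn_Icc_of_ae_eq volume zero_ne_one ?_ Φ.continuous.continuousOn hF
    rw [← Measure.restrict_congr_set Ioo_ae_eq_Icc]
    exact (e.coeFn_ae_eq_tsum_of_summable he f hcφ).symm.trans hrep
  rw [← hΦF (right_mem_Icc.mpr zero_le_one)]
  exact ((BoundedContinuousFunction.evalCLM ℝ 1).map_tsum hcφ.of_norm).symm

theorem trace_series_expansion
    (θ : ℝ) (hθ : θ ∈ Ioo 0 (π / 2)) (a : ℝ) (ha : 0 < a)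
    (r : ℕ → ℝ)
    (hr : ∀ n : ℕ, r n ∈ Ioo (n * π) ((n + 1) * π) ∧
      r n * (Real.cos (r n) / Real.sin (r n)) = -(Real.cos θ / Real.sin θ))
    (lam : ℕ → ℝ)
    (hlam : Tendsto (fun n : ℕ => lam n / (-(a * (n : ℝ) ^ 2 * π ^ 2))) atTop (nhds 1))
    (e : HilbertBasis ℕ ℝ (Lp ℝ 2 (volume.restrict (Ioo (0:ℝ) 1))))
    (he : ∀ n : ℕ,
      (e n : Lp ℝ 2 (volume.restrict (Ioo (0:ℝ) 1)))
        =ᵐ[volume.restrict (Ioo (0:ℝ) 1)]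
      fun x => 2 * Real.sqrt (r n / (2 * r n - Real.sin (2 * r n))) * Real.sin (r n * x))
    (f : Lp ℝ 2 (volume.restrict (Ioo (0:ℝ) 1)))
    (hf : Summable (fun n : ℕ =>
      |lam n| ^ 2 * (inner (𝕜 := ℝ) f (e n : Lp ℝ 2 (volume.restrict (Ioo (0:ℝ) 1)))) ^ 2))
    (F : ℝ → ℝ) (hF : ContinuousOn F (Icc 0 1))
    (hrep : (f : ℝ → ℝ) =ᵐ[volume.restrict (Ioo (0:ℝ) 1)] F) :
    Summable (fun n : ℕ =>
      |inner (𝕜 := ℝ) f (e n : Lp ℝ 2 (volume.restrict (Ioo (0:ℝ) 1)))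
        * (2 * Real.sqrt (r n / (2 * r n - Real.sin (2 * r n))) * Real.sin (r n * 1))|) ∧
    ∑' n : ℕ,
      inner (𝕜 := ℝ) f (e n : Lp ℝ 2 (volume.restrict (Ioo (0:ℝ) 1)))
        * (2 * Real.sqrt (r n / (2 * r n - Real.sin (2 * r n))) * Real.sin (r n * 1))
      = F 1 :=
  trace_series_expansion_general θ a ha r hr lam hlam e he f hf F hF hrep
end

section
/- Let A ∈ ℝ^{N×N} with ‖e^{At}‖ ≤ M e^{−σt} for all t ≥ 0 (M ≥ 1, σ > 0), and let h₂, h₃ : [0,∞) → [h_m, h_M] be continuous with |h₂(t) − h₃(t)| ≤ δ for all t. Then for any continuously differentiable x : [−h_M, ∞) → ℝ^N solving ẋ(t) = A x(t) + f(t) on [0, ∞) with f continuous, one has for all t ≥ h_M: ‖x(t − h₂(t)) − x(t − h₃(t))‖ ≤ (e^{δ‖A‖} − 1)·sup_{τ∈[t−h_M, t]} ‖x(τ)‖ + δ M · sup_{τ∈[t−h_M, t]} ‖f(τ)‖. -/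
open Real Set

/-!
Both delayed times `t - h₂ t` and `t - h₃ t` lie in the window `[t - h_M, t] ⊆ [0, ∞)`, where the
solution satisfies `‖ẋ‖ ≤ ‖A‖ sup ‖x‖ + sup ‖f‖`. The mean value inequality over the gap
`|h₂ t - h₃ t| ≤ δ` then gives the bound, after `δ ‖A‖ ≤ exp (δ ‖A‖) - 1` and `1 ≤ M`.
-/

theorem IsCompact.le_iSup_of_continuousOn {X : Type*} [TopologicalSpace X] {K : Set X}
    (hK : IsCompact K) {g : X → ℝ} (hg : ContinuousOn g K) {s : X} (hs : s ∈ K) :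
    g s ≤ ⨆ τ : K, g τ :=
  le_ciSup (by simpa only [image_eq_range] using hK.bddAbove_image hg) (⟨s, hs⟩ : K)

theorem norm_sub_le_of_hasDerivAt_clm_add {E : Type*} [NormedAddCommGroup E] [NormedSpace ℝ E]
    {A : E →L[ℝ] E} {x f : ℝ → E} {K : Set ℝ} (hK : Convex ℝ K) {X F : ℝ}
    (hx : ∀ s ∈ K, HasDerivAt x (A (x s) + f s) s)
    (hxX : ∀ s ∈ K, ‖x s‖ ≤ X) (hfF : ∀ s ∈ K, ‖f s‖ ≤ F) {a b : ℝ} (ha : a ∈ K) (hb : b ∈ K) :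
    ‖x a - x b‖ ≤ (‖A‖ * X + F) * |a - b| := by
  refine hK.norm_image_sub_le_of_norm_hasDerivWithin_le
    (fun s hs ↦ (hx s hs).hasDerivWithinAt) (fun s hs ↦ ?_) hb ha
  calc ‖A (x s) + f s‖ ≤ ‖A‖ * ‖x s‖ + ‖f s‖ :=
      (norm_add_le _ _).trans (by gcongr; exact A.le_opNorm _)
    _ ≤ ‖A‖ * X + F := by gcongr; exacts [hxX s hs, hfF s hs]

theorem mul_add_mul_le_exp_sub_one_mul_add {α δ X F M : ℝ} (hδ : 0 ≤ δ) (hX : 0 ≤ X) (hF : 0 ≤ F)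
    (hM : 1 ≤ M) : (α * X + F) * δ ≤ (Real.exp (δ * α) - 1) * X + δ * M * F := by
  calc (α * X + F) * δ = (δ * α) * X + δ * 1 * F := by ring
    _ ≤ (Real.exp (δ * α) - 1) * X + δ * M * F := by
      gcongr
      linarith [Real.add_one_le_exp (δ * α)]

theorem delay_mismatch_estimate_general
    (N : ℕ) (M δ h_m h_M : ℝ) (hM : 1 ≤ M) (hδ : 0 ≤ δ)
    (hm : 0 < h_m) (hmM : h_m < h_M)
    (A : EuclideanSpace ℝ (Fin N) →L[ℝ] EuclideanSpace ℝ (Fin N))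
    (h₂ h₃ : ℝ → ℝ)
    (hh₂r : ∀ t, 0 ≤ t → h₂ t ∈ Icc h_m h_M) (hh₃r : ∀ t, 0 ≤ t → h₃ t ∈ Icc h_m h_M)
    (hmis : ∀ t, 0 ≤ t → |h₂ t - h₃ t| ≤ δ)
    (f : ℝ → EuclideanSpace ℝ (Fin N)) (hf : Continuous f)
    (x : ℝ → EuclideanSpace ℝ (Fin N))
    (hx_diff : ∀ t, 0 ≤ t → HasDerivAt x (A (x t) + f t) t) :
    ∀ t, h_M ≤ t →
      ‖x (t - h₂ t) - x (t - h₃ t)‖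
        ≤ (Real.exp (δ * ‖A‖) - 1) * (⨆ τ : Icc (t - h_M) t, ‖x τ‖)
          + δ * M * ⨆ τ : Icc (t - h_M) t, ‖f τ‖ := by
  intro t ht
  have ht0 : 0 ≤ t := by linarith
  have hwindow : ∀ s ∈ Icc (t - h_M) t, HasDerivAt x (A (x s) + f s) s :=
    fun s hs ↦ hx_diff s (by linarith [hs.1])
  have hdelay : ∀ h ∈ Icc h_m h_M, t - h ∈ Icc (t - h_M) t :=
    fun h hh ↦ ⟨by linarith [hh.2], by linarith [hh.1]⟩
  set X := ⨆ τ : Icc (t - h_M) t, ‖x τ‖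
  set F := ⨆ τ : Icc (t - h_M) t, ‖f τ‖
  have hxX : ∀ s ∈ Icc (t - h_M) t, ‖x s‖ ≤ X := fun s ↦ isCompact_Icc.le_iSup_of_continuousOn
    (fun s hs ↦ (hwindow s hs).continuousAt.norm.continuousWithinAt)
  have hfF : ∀ s ∈ Icc (t - h_M) t, ‖f s‖ ≤ F := fun s ↦
    isCompact_Icc.le_iSup_of_continuousOn hf.norm.continuousOn
  have htmem : t ∈ Icc (t - h_M) t := ⟨by linarith, le_rfl⟩
  have hX : 0 ≤ X := (norm_nonneg _).trans (hxX t htmem)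
  have hF : 0 ≤ F := (norm_nonneg _).trans (hfF t htmem)
  calc ‖x (t - h₂ t) - x (t - h₃ t)‖
      ≤ (‖A‖ * X + F) * |(t - h₂ t) - (t - h₃ t)| :=
        norm_sub_le_of_hasDerivAt_clm_add (convex_Icc _ _) hwindow hxX hfF
          (hdelay _ (hh₂r t ht0)) (hdelay _ (hh₃r t ht0))
    _ ≤ (‖A‖ * X + F) * δ := by
        gcongr
        simpa [abs_sub_comm] using hmis t ht0
    _ ≤ _ := mul_add_mul_le_exp_sub_one_mul_add hδ hX hF hM

theorem delay_mismatch_estimate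
    (N : ℕ) (M σ δ h_m h_M : ℝ) (hM : 1 ≤ M) (hσ : 0 < σ) (hδ : 0 ≤ δ)
    (hm : 0 < h_m) (hmM : h_m < h_M)
    (A : EuclideanSpace ℝ (Fin N) →L[ℝ] EuclideanSpace ℝ (Fin N))
    (hA : ∀ t : ℝ, 0 ≤ t → ‖NormedSpace.exp (t • A)‖ ≤ M * Real.exp (-σ * t))
    (h₂ h₃ : ℝ → ℝ) (hh₂ : Continuous h₂) (hh₃ : Continuous h₃)
    (hh₂r : ∀ t, 0 ≤ t → h₂ t ∈ Icc h_m h_M) (hh₃r : ∀ t, 0 ≤ t → h₃ t ∈ Icc h_m h_M)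
    (hmis : ∀ t, 0 ≤ t → |h₂ t - h₃ t| ≤ δ)
    (f : ℝ → EuclideanSpace ℝ (Fin N)) (hf : Continuous f)
    (x : ℝ → EuclideanSpace ℝ (Fin N)) (hx : Continuous x)
    (hx_diff : ∀ t, 0 ≤ t → HasDerivAt x (A (x t) + f t) t) :
    ∀ t, h_M ≤ t →
      ‖x (t - h₂ t) - x (t - h₃ t)‖
        ≤ (Real.exp (δ * ‖A‖) - 1) * (⨆ τ : Icc (t - h_M) t, ‖x τ‖)
          + δ * M * ⨆ τ : Icc (t - h_M) t, ‖f τ‖ :=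
  delay_mismatch_estimate_general N M δ h_m h_M hM hδ hm hmM A h₂ h₃ hh₂r hh₃r hmis f hf x hx_diff
end
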